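/- In Van Loan's theorem, the (1,3) block of exp(Ξt) equals H₁(t) = ∫₀ᵗ exp(A₁(t−s)) C₁ exp(A₃ s) ds + ∫₀ᵗ ∫₀ˢ exp(A₁(t−s)) B₁ exp(A₂(s−r)) B₂ exp(A₃ r) dr ds. -/

import Mathlib

/-!
Differentiating `exp (u • Ξ)` blockwise, its blocks satisfy a triangular system of linear matrix
ODEs, each of which is solved by variation of constants: `f' = A f + g` gives
`f t = exp (t • A) * f 0 + ∫₀ᵗ exp ((t - s) • A) * g s ds`. The (2,3) block `Y` vanishes at `0`
and solves `Y' = A₂ Y + B₂ exp (u • A₃)`, which yields the inner integral; the (1,3) block then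
vanishes at `0` and solves `F' = A₁ F + B₁ Y + C₁ exp (u • A₃)`.
-/

open Matrix NormedSpace MeasureTheory

namespace Matrix

theorem fromBlocks_zero₂₁_mul {l m n o α : Type*} [Fintype l] [Fintype m]
    [NonUnitalNonAssocSemiring α] (P : Matrix l l α) (Q : Matrix l m α) (R : Matrix m m α)
    (X : Matrix (l ⊕ m) (n ⊕ o) α) :
    fromBlocks P Q 0 R * X =
      fromBlocks (P * X.toBlocks₁₁ + Q * X.toBlocks₂₁) (P * X.toBlocks₁₂ + Q * X.toBlocks₂₂)
        (R * X.toBlocks₂₁) (R * X.toBlocks₂₂) := by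
  conv_lhs => rw [← fromBlocks_toBlocks X, fromBlocks_multiply]
  simp only [Matrix.zero_mul, zero_add]

end Matrix

/- Mathlib's `L∞` operator norm on matrices, with the uniformity replaced by the product one: the
topology is then syntactically the standard one on `Matrix`, which is all `NormedSpace.exp` sees,
so the analytic API applies to the statements below. -/
namespace Matrix.LinftyOp

variable {m n : Type*} [Fintype m] [Fintype n]

noncomputable scoped instance normedAddCommGroup : NormedAddCommGroup (Matrix m n ℝ) :=
  { Matrix.linftyOpNormedAddCommGroup (m := m) (n := n) (α := ℝ) with
    toMetricSpace := (Matrix.linftyOpNormedAddCommGroup (m := m) (n := n) (α := ℝ)).toMetricSpace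
      |>.replaceUniformity rfl
    dist_eq := (Matrix.linftyOpNormedAddCommGroup (m := m) (n := n) (α := ℝ)).dist_eq }

noncomputable scoped instance normedSpace : NormedSpace ℝ (Matrix m n ℝ) :=
  { Matrix.module with
    norm_smul_le := (Matrix.linftyOpNormedSpace (m := m) (n := n) (R := ℝ) (α := ℝ)).norm_smul_le }

noncomputable scoped instance normedRing [DecidableEq n] : NormedRing (Matrix n n ℝ) :=
  { Matrix.linftyOpNormedRing (n := n) (α := ℝ) with
    toMetricSpace := (normedAddCommGroup (m := n) (n := n)).toMetricSpace
    dist_eq := (Matrix.linftyOpNormedRing (n := n) (α := ℝ)).dist_eq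
    norm_mul_le := (Matrix.linftyOpNormedRing (n := n) (α := ℝ)).norm_mul_le }

noncomputable scoped instance normedAlgebra [DecidableEq n] : NormedAlgebra ℝ (Matrix n n ℝ) :=
  { Matrix.instAlgebra with
    norm_smul_le := (Matrix.linftyOpNormedAlgebra (n := n) (R := ℝ) (α := ℝ)).norm_smul_le }

end Matrix.LinftyOp

section

open scoped Matrix.LinftyOp

variable {l m n o : Type*} [Fintype l] [Fintype m] [Fintype n] [Fintype o]

namespace Matrix

noncomputable def mulCLM : Matrix l m ℝ →L[ℝ] Matrix m n ℝ →L[ℝ] Matrix l n ℝ :=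
  LinearMap.toContinuousLinearMap
    (LinearMap.toContinuousLinearMap.toLinearMap ∘ₗ mulLinearMap ℝ)

@[simp]
theorem mulCLM_apply (X : Matrix l m ℝ) (Y : Matrix m n ℝ) : mulCLM X Y = X * Y := rfl

def submatrixLinearMap (r : l → m) (c : o → n) : Matrix m n ℝ →ₗ[ℝ] Matrix l o ℝ where
  toFun M := M.submatrix r c
  map_add' _ _ := rfl
  map_smul' _ _ := rfl

theorem intervalIntegral_apply {f : ℝ → Matrix m n ℝ} {a b : ℝ}
    (hf : IntervalIntegrable f volume a b) (i : m) (j : n) :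
    (∫ s in a..b, f s) i j = ∫ s in a..b, f s i j :=
  ((LinearMap.toContinuousLinearMap (entryLinearMap ℝ ℝ i j)).intervalIntegral_comp_comm hf).symm

end Matrix

theorem HasDerivAt.matrix_mul {f : ℝ → Matrix l m ℝ} {g : ℝ → Matrix m n ℝ} {f' : Matrix l m ℝ}
    {g' : Matrix m n ℝ} {t : ℝ} (hf : HasDerivAt f f' t) (hg : HasDerivAt g g' t) :
    HasDerivAt (fun u => f u * g u) (f' * g t + f t * g') t := by
  simpa [add_comm] using mulCLM.hasDerivAt_of_bilinear (fun _ => hf) (fun _ => hg)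

theorem HasDerivAt.matrix_submatrix {f : ℝ → Matrix m n ℝ} {f' : Matrix m n ℝ} {t : ℝ}
    (hf : HasDerivAt f f' t) (r : l → m) (c : o → n) :
    HasDerivAt (fun u => (f u).submatrix r c) (f'.submatrix r c) t :=
  (LinearMap.toContinuousLinearMap (submatrixLinearMap r c)).hasFDerivAt.comp_hasDerivAt t hf

section Blocks

variable {f : ℝ → Matrix (l ⊕ m) (n ⊕ o) ℝ} {f' : Matrix (l ⊕ m) (n ⊕ o) ℝ} {t : ℝ}

theorem HasDerivAt.matrix_toBlocks₁₁ (hf : HasDerivAt f f' t) :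
    HasDerivAt (fun u => (f u).toBlocks₁₁) f'.toBlocks₁₁ t :=
  hf.matrix_submatrix Sum.inl Sum.inl

theorem HasDerivAt.matrix_toBlocks₁₂ (hf : HasDerivAt f f' t) :
    HasDerivAt (fun u => (f u).toBlocks₁₂) f'.toBlocks₁₂ t :=
  hf.matrix_submatrix Sum.inl Sum.inr

theorem HasDerivAt.matrix_toBlocks₂₁ (hf : HasDerivAt f f' t) :
    HasDerivAt (fun u => (f u).toBlocks₂₁) f'.toBlocks₂₁ t :=
  hf.matrix_submatrix Sum.inr Sum.inl

theorem HasDerivAt.matrix_toBlocks₂₂ (hf : HasDerivAt f f' t) :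
    HasDerivAt (fun u => (f u).toBlocks₂₂) f'.toBlocks₂₂ t :=
  hf.matrix_submatrix Sum.inr Sum.inr

variable {P : Matrix l l ℝ} {Q : Matrix l m ℝ} {R : Matrix m m ℝ} {H : Matrix (l ⊕ m) (n ⊕ o) ℝ}

theorem HasDerivAt.toBlocks₁₁_of_fromBlocks_zero₂₁
    (hf : HasDerivAt f (fromBlocks P Q 0 R * f t + H) t) :
    HasDerivAt (fun u => (f u).toBlocks₁₁)
      (P * (f t).toBlocks₁₁ + (Q * (f t).toBlocks₂₁ + H.toBlocks₁₁)) t :=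
  hf.matrix_toBlocks₁₁.congr_deriv <| by
    rw [fromBlocks_zero₂₁_mul]; ext; simp [toBlocks₁₁, add_assoc]

theorem HasDerivAt.toBlocks₂₁_of_fromBlocks_zero₂₁
    (hf : HasDerivAt f (fromBlocks P Q 0 R * f t + H) t) :
    HasDerivAt (fun u => (f u).toBlocks₂₁) (R * (f t).toBlocks₂₁ + H.toBlocks₂₁) t :=
  hf.matrix_toBlocks₂₁.congr_deriv (by rw [fromBlocks_zero₂₁_mul]; rfl)

end Blocks

theorem continuous_exp_smul [DecidableEq m] (A : Matrix m m ℝ) :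
    Continuous fun u : ℝ => exp (u • A) :=
  continuous_iff_continuousAt.2 fun t => (hasDerivAt_exp_smul_const' A t).continuousAt

theorem continuous_exp_sub_smul [DecidableEq m] (A : Matrix m m ℝ) (t : ℝ) :
    Continuous fun s : ℝ => exp ((t - s) • A) :=
  (continuous_exp_smul A).comp (continuous_const.sub continuous_id)

theorem eq_exp_smul_mul_add_integral [DecidableEq m] {A : Matrix m m ℝ} {f g : ℝ → Matrix m n ℝ}
    (hf : ∀ u, HasDerivAt f (A * f u + g u) u) (hg : Continuous g) (t : ℝ) :
    f t = exp (t • A) * f 0 + ∫ s in 0..t, exp ((t - s) • A) * g s := by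
  have hexp (s : ℝ) : HasDerivAt (fun u => exp ((t - u) • A)) (-(A * exp ((t - s) • A))) s :=
    ((hasDerivAt_exp_smul_const' A (t - s)).scomp s
      ((hasDerivAt_id s).const_sub t)).congr_deriv (by simp)
  have hφ (s : ℝ) :
      HasDerivAt (fun u => exp ((t - u) • A) * f u) (exp ((t - s) • A) * g s) s := by
    convert (hexp s).matrix_mul (hf s) using 1
    rw [Matrix.mul_add, ← Matrix.mul_assoc, Matrix.neg_mul,
      ((Commute.refl A).smul_right (t - s)).exp_right.eq]
    abel
  have hFTC := intervalIntegral.integral_eq_sub_of_hasDerivAt (fun s _ => hφ s)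
    (((continuous_exp_sub_smul A t).matrix_mul hg).intervalIntegrable 0 t)
  rw [hFTC, sub_self, sub_zero, zero_smul, exp_zero, Matrix.one_mul]
  abel

theorem eq_exp_smul_mul_of_hasDerivAt [DecidableEq m] {A : Matrix m m ℝ} {f : ℝ → Matrix m n ℝ}
    (hf : ∀ u, HasDerivAt f (A * f u) u) (t : ℝ) : f t = exp (t • A) * f 0 := by
  simpa using
    eq_exp_smul_mul_add_integral (g := 0) (fun u => by simpa using hf u) continuous_const t

section TwoByTwo

variable [DecidableEq l] [DecidableEq m] (P : Matrix l l ℝ) (Q : Matrix l m ℝ) (R : Matrix m m ℝ)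
  (t : ℝ)

theorem exp_smul_fromBlocks_zero₂₁ :
    exp (t • fromBlocks P Q 0 R) =
      fromBlocks (exp (t • P)) (exp (t • fromBlocks P Q 0 R)).toBlocks₁₂ 0 (exp (t • R)) := by
  set M := fromBlocks P Q 0 R
  have hE (u : ℝ) : HasDerivAt (fun u => exp (u • M)) (M * exp (u • M)) u :=
    hasDerivAt_exp_smul_const' M u
  have h₂₁ (u : ℝ) : (exp (u • M)).toBlocks₂₁ = 0 := by
    have := eq_exp_smul_mul_of_hasDerivAt (f := fun u => (exp (u • M)).toBlocks₂₁) (A := R)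
      (fun u => by simpa [M, fromBlocks_zero₂₁_mul] using (hE u).matrix_toBlocks₂₁) u
    simpa [← fromBlocks_one] using this
  have h₂₂ (u : ℝ) : (exp (u • M)).toBlocks₂₂ = exp (u • R) := by
    have := eq_exp_smul_mul_of_hasDerivAt (f := fun u => (exp (u • M)).toBlocks₂₂) (A := R)
      (fun u => by simpa [M, fromBlocks_zero₂₁_mul] using (hE u).matrix_toBlocks₂₂) u
    simpa [← fromBlocks_one] using this
  have h₁₁ : (exp (t • M)).toBlocks₁₁ = exp (t • P) := by
    have := eq_exp_smul_mul_of_hasDerivAt (f := fun u => (exp (u • M)).toBlocks₁₁) (A := P)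
      (fun u => by simpa [M, fromBlocks_zero₂₁_mul, h₂₁] using (hE u).matrix_toBlocks₁₁) t
    simpa [← fromBlocks_one] using this
  conv_lhs => rw [← fromBlocks_toBlocks (exp (t • M))]
  rw [h₁₁, h₂₁, h₂₂]

theorem hasDerivAt_toBlocks₁₂_exp_smul_fromBlocks_zero₂₁ :
    HasDerivAt (fun u => (exp (u • fromBlocks P Q 0 R)).toBlocks₁₂)
      (P * (exp (t • fromBlocks P Q 0 R)).toBlocks₁₂ + Q * exp (t • R)) t := by
  have h := (hasDerivAt_exp_smul_const' (fromBlocks P Q 0 R) t).matrix_toBlocks₁₂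
  rwa [fromBlocks_zero₂₁_mul, toBlocks_fromBlocks₁₂, exp_smul_fromBlocks_zero₂₁ P Q R t,
    toBlocks_fromBlocks₂₂, toBlocks_fromBlocks₁₂] at h

theorem toBlocks₁₂_exp_smul_fromBlocks_zero₂₁ :
    (exp (t • fromBlocks P Q 0 R)).toBlocks₁₂ =
      ∫ s in 0..t, exp ((t - s) • P) * Q * exp (s • R) := by
  have h := eq_exp_smul_mul_add_integral (hasDerivAt_toBlocks₁₂_exp_smul_fromBlocks_zero₂₁ P Q R)
    (continuous_const.matrix_mul (continuous_exp_smul R)) t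
  simpa [← fromBlocks_one, Matrix.mul_assoc] using h

-- The parametric integral is a block of `exp (t • fromBlocks P Q 0 R)`, hence differentiable in `t`.
theorem continuous_intervalIntegral_exp_smul_mul_exp_smul :
    Continuous fun t => ∫ s in 0..t, exp ((t - s) • P) * Q * exp (s • R) := by
  simp_rw [← toBlocks₁₂_exp_smul_fromBlocks_zero₂₁]
  exact continuous_iff_continuousAt.2 fun t =>
    (hasDerivAt_toBlocks₁₂_exp_smul_fromBlocks_zero₂₁ P Q R t).continuousAt

end TwoByTwo

theorem toBlocks₁₁_toBlocks₁₂_exp_smul_fromBlocks_zero₂₁ [DecidableEq l] [DecidableEq m]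
    [DecidableEq n] [DecidableEq o]
    (A₁ : Matrix l l ℝ) (A₂ : Matrix m m ℝ) (A₃ : Matrix n n ℝ) (A₄ : Matrix o o ℝ)
    (B₁ : Matrix l m ℝ) (B₂ : Matrix m n ℝ) (B₃ : Matrix n o ℝ)
    (C₁ : Matrix l n ℝ) (C₂ : Matrix m o ℝ) (D₁ : Matrix l o ℝ) (t : ℝ) :
    (exp (t • fromBlocks (fromBlocks A₁ B₁ 0 A₂) (fromBlocks C₁ D₁ B₂ C₂) 0
        (fromBlocks A₃ B₃ 0 A₄))).toBlocks₁₂.toBlocks₁₁ =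
      (∫ s in 0..t, exp ((t - s) • A₁) * C₁ * exp (s • A₃)) +
        ∫ s in 0..t, exp ((t - s) • A₁) * B₁ *
          ∫ r in 0..s, exp ((s - r) • A₂) * B₂ * exp (r • A₃) := by
  set G := fun u : ℝ => (exp (u • fromBlocks (fromBlocks A₁ B₁ 0 A₂) (fromBlocks C₁ D₁ B₂ C₂) 0
    (fromBlocks A₃ B₃ 0 A₄))).toBlocks₁₂
  have hG := hasDerivAt_toBlocks₁₂_exp_smul_fromBlocks_zero₂₁ (fromBlocks A₁ B₁ 0 A₂)
    (fromBlocks C₁ D₁ B₂ C₂) (fromBlocks A₃ B₃ 0 A₄)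
  have hG₀ : G 0 = 0 := by simp [G, ← fromBlocks_one]
  have hQ (u : ℝ) :
      (fromBlocks C₁ D₁ B₂ C₂ * exp (u • fromBlocks A₃ B₃ 0 A₄)).toBlocks₁₁ = C₁ * exp (u • A₃) ∧
      (fromBlocks C₁ D₁ B₂ C₂ * exp (u • fromBlocks A₃ B₃ 0 A₄)).toBlocks₂₁ =
        B₂ * exp (u • A₃) := by
    rw [exp_smul_fromBlocks_zero₂₁, fromBlocks_multiply]
    simp
  have hY (u : ℝ) : HasDerivAt (fun u => (G u).toBlocks₂₁)
      (A₂ * (G u).toBlocks₂₁ + B₂ * exp (u • A₃)) u := by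
    simpa only [(hQ u).2] using (hG u).toBlocks₂₁_of_fromBlocks_zero₂₁
  have hF (u : ℝ) : HasDerivAt (fun u => (G u).toBlocks₁₁)
      (A₁ * (G u).toBlocks₁₁ + (B₁ * (G u).toBlocks₂₁ + C₁ * exp (u • A₃))) u := by
    simpa only [(hQ u).1] using (hG u).toBlocks₁₁_of_fromBlocks_zero₂₁
  have hY_eq (s : ℝ) :
      (G s).toBlocks₂₁ = ∫ r in 0..s, exp ((s - r) • A₂) * B₂ * exp (r • A₃) := by
    have h₀ : (G 0).toBlocks₂₁ = 0 := by rw [hG₀]; rfl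
    simpa [h₀, Matrix.mul_assoc] using eq_exp_smul_mul_add_integral hY
      (continuous_const.matrix_mul (continuous_exp_smul A₃)) s
  have hY_cont : Continuous fun u => (G u).toBlocks₂₁ :=
    continuous_iff_continuousAt.2 fun u => (hY u).continuousAt
  have hF₀ : (G 0).toBlocks₁₁ = 0 := by rw [hG₀]; rfl
  rw [eq_exp_smul_mul_add_integral hF ((continuous_const.matrix_mul hY_cont).add
      (continuous_const.matrix_mul (continuous_exp_smul A₃))) t,
    hF₀, Matrix.mul_zero, zero_add]
  simp_rw [← hY_eq]
  rw [← intervalIntegral.integral_add]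
  · refine intervalIntegral.integral_congr fun s _ => ?_
    simp only [Matrix.mul_add, Matrix.mul_assoc, add_comm]
  · exact (((continuous_exp_sub_smul A₁ t).matrix_mul continuous_const).matrix_mul
      (continuous_exp_smul A₃)).intervalIntegrable 0 t
  · exact (((continuous_exp_sub_smul A₁ t).matrix_mul continuous_const).matrix_mul
      hY_cont).intervalIntegrable 0 t

end

theorem vanLoan_H1_general {n₁ n₂ n₃ n₄ : ℕ}
    (A₁ : Matrix (Fin n₁) (Fin n₁) ℝ) (A₂ : Matrix (Fin n₂) (Fin n₂) ℝ)
    (A₃ : Matrix (Fin n₃) (Fin n₃) ℝ) (A₄ : Matrix (Fin n₄) (Fin n₄) ℝ)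
    (B₁ : Matrix (Fin n₁) (Fin n₂) ℝ) (B₂ : Matrix (Fin n₂) (Fin n₃) ℝ)
    (B₃ : Matrix (Fin n₃) (Fin n₄) ℝ)
    (C₁ : Matrix (Fin n₁) (Fin n₃) ℝ) (C₂ : Matrix (Fin n₂) (Fin n₄) ℝ)
    (D₁ : Matrix (Fin n₁) (Fin n₄) ℝ) (t : ℝ) :
    (fun i j => NormedSpace.exp (t • Matrix.fromBlocks
          (Matrix.fromBlocks A₁ B₁ 0 A₂) (Matrix.fromBlocks C₁ D₁ B₂ C₂)
          0 (Matrix.fromBlocks A₃ B₃ 0 A₄))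
        (Sum.inl (Sum.inl i)) (Sum.inr (Sum.inl j))) =
      (fun i j =>
        (∫ s in (0:ℝ)..t,
          (NormedSpace.exp ((t - s) • A₁) * C₁ * NormedSpace.exp (s • A₃)) i j) +
        (∫ s in (0:ℝ)..t,
          (NormedSpace.exp ((t - s) • A₁) * B₁ *
            (Matrix.of fun i' j' => ∫ r in (0:ℝ)..s,
              (NormedSpace.exp ((s - r) • A₂) * B₂ * NormedSpace.exp (r • A₃)) i' j')) i j) :
        Matrix (Fin n₁) (Fin n₃) ℝ) := by
  open scoped Matrix.LinftyOp in (
  funext i j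
  have hinner (s : ℝ) : (Matrix.of fun i' j' => ∫ r in 0..s,
      (exp ((s - r) • A₂) * B₂ * exp (r • A₃)) i' j') =
      ∫ r in 0..s, exp ((s - r) • A₂) * B₂ * exp (r • A₃) := by
    ext i' j'
    exact (intervalIntegral_apply ((((continuous_exp_sub_smul A₂ s).matrix_mul
      continuous_const).matrix_mul (continuous_exp_smul A₃)).intervalIntegrable 0 s) i' j').symm
  simp only [hinner]
  rw [← intervalIntegral_apply, ← intervalIntegral_apply, ← Matrix.add_apply,
    ← toBlocks₁₁_toBlocks₁₂_exp_smul_fromBlocks_zero₂₁ A₁ A₂ A₃ A₄ B₁ B₂ B₃ C₁ C₂ D₁ t]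
  · rfl
  · exact (((continuous_exp_sub_smul A₁ t).matrix_mul continuous_const).matrix_mul
      (continuous_intervalIntegral_exp_smul_mul_exp_smul A₂ B₂ A₃)).intervalIntegrable 0 t
  · exact (((continuous_exp_sub_smul A₁ t).matrix_mul continuous_const).matrix_mul
      (continuous_exp_smul A₃)).intervalIntegrable 0 t)

/-- Van Loan's theorem, (1,3) block: the (1,3) block of `exp(Ξ t)` equals
`H₁(t) = ∫₀ᵗ exp(A₁(t−s)) C₁ exp(A₃ s) ds
       + ∫₀ᵗ ∫₀ˢ exp(A₁(t−s)) B₁ exp(A₂(s−r)) B₂ exp(A₃ r) dr ds`. -/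
theorem vanLoan_H1 {n₁ n₂ n₃ n₄ : ℕ}
    (A₁ : Matrix (Fin n₁) (Fin n₁) ℝ) (A₂ : Matrix (Fin n₂) (Fin n₂) ℝ)
    (A₃ : Matrix (Fin n₃) (Fin n₃) ℝ) (A₄ : Matrix (Fin n₄) (Fin n₄) ℝ)
    (B₁ : Matrix (Fin n₁) (Fin n₂) ℝ) (B₂ : Matrix (Fin n₂) (Fin n₃) ℝ)
    (B₃ : Matrix (Fin n₃) (Fin n₄) ℝ)
    (C₁ : Matrix (Fin n₁) (Fin n₃) ℝ) (C₂ : Matrix (Fin n₂) (Fin n₄) ℝ)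
    (D₁ : Matrix (Fin n₁) (Fin n₄) ℝ) (t : ℝ) (ht : 0 ≤ t) :
    (fun i j => NormedSpace.exp (t • Matrix.fromBlocks
          (Matrix.fromBlocks A₁ B₁ 0 A₂) (Matrix.fromBlocks C₁ D₁ B₂ C₂)
          0 (Matrix.fromBlocks A₃ B₃ 0 A₄))
        (Sum.inl (Sum.inl i)) (Sum.inr (Sum.inl j))) =
      (fun i j =>
        (∫ s in (0:ℝ)..t,
          (NormedSpace.exp ((t - s) • A₁) * C₁ * NormedSpace.exp (s • A₃)) i j) +
        (∫ s in (0:ℝ)..t,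
          (NormedSpace.exp ((t - s) • A₁) * B₁ *
            (Matrix.of fun i' j' => ∫ r in (0:ℝ)..s,
              (NormedSpace.exp ((s - r) • A₂) * B₂ * NormedSpace.exp (r • A₃)) i' j')) i j) :
        Matrix (Fin n₁) (Fin n₃) ℝ) :=
  vanLoan_H1_general A₁ A₂ A₃ A₄ B₁ B₂ B₃ C₁ C₂ D₁ t
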